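/- For every s, t ∈ [0,1] with s ≤ t and every R with (t−s)/3 < R ≤ 1 there exist analytic functions φ and q on 𝔻 with φ'(z) ≠ 0 and q(z)² ≠ 1 for all z ∈ 𝔻 such that sup_{z∈𝔻} (1−|z|²)²|Sφ(z)| = 2s, q(z)² = R·z² for all z ∈ 𝔻, and the shear f = h + conj(g) determined by h − g = φ and dilatation ω = q² satisfies Φ_f(0) > 2t. -/

import Mathlib

open Complex Metric ComplexConjugate

/-- The Schwarzian derivative `SF = (F''/F')' - (1/2)(F''/F')^2`. -/
noncomputable def schwarzian (F : ℂ → ℂ) (z : ℂ) : ℂ :=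
  deriv (fun w => deriv (deriv F) w / deriv F w) z
    - (1 / 2) * (deriv (deriv F) z / deriv F z) ^ 2

/-- The Schwarzian derivative of the shear `f = h + conj g` determined by `h - g = φ`
and dilatation `ω = g'/h' = q²`:
`Sf = Sφ + 2(q/(1-q²) + conj q/(1+|q|²))·(q'' - q'·φ''/φ')`
`   + 2q'²(1-|q|²+2q²|q|²)/((1-q²)²(1+|q|²)) - 4(q' conj q/(1+|q|²))²`. -/
noncomputable def Sshear (φ q : ℂ → ℂ) (z : ℂ) : ℂ :=
  schwarzian φ z
    + 2 * (q z / (1 - (q z) ^ 2) + conj (q z) / (1 + ((‖q z‖ : ℂ)) ^ 2)) *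
        (deriv (deriv q) z - deriv q z * (deriv (deriv φ) z / deriv φ z))
    + 2 * (deriv q z) ^ 2 *
        (1 - ((‖q z‖ : ℂ)) ^ 2
          + 2 * (q z) ^ 2 * ((‖q z‖ : ℂ)) ^ 2) /
        ((1 - (q z) ^ 2) ^ 2 * (1 + ((‖q z‖ : ℂ)) ^ 2))
    - 4 * (deriv q z * conj (q z) / (1 + ((‖q z‖ : ℂ)) ^ 2)) ^ 2

/-- `Φ_f(z) = |Sf(z)| + 4|q'(z)|²/(1+|q(z)|²)²` for the shear `f`. -/
noncomputable def PhiShear (φ q : ℂ → ℂ) (z : ℂ) : ℝ :=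
  ‖Sshear φ q z‖
    + 4 * (‖deriv q z‖) ^ 2 / (1 + (‖q z‖) ^ 2) ^ 2

/-!
Take for `φ` an entire function with constant Schwarzian `2s` (the identity, or `exp (b z)` with
`b² = -4s`), so that the hyperbolic supremum is attained at the origin, and `q z = a z` with
`a² = R`. As `q 0 = 0`, only two terms of `Sf` survive at the origin: `Sf(0) = Sφ(0) + 2q'(0)²
= 2s + 2R`, hence `Φ_f(0) = 2s + 6R > 2t`. The shear itself exists because `φ'/(1 - q²)` has a
primitive on the disk.
-/

theorem exists_shear {c : ℂ} {r : ℝ} {φ ω : ℂ → ℂ} (hφ : DifferentiableOn ℂ φ (ball c r))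
    (hω : DifferentiableOn ℂ ω (ball c r)) (hω1 : ∀ z ∈ ball c r, ω z ≠ 1) :
    ∃ h g : ℂ → ℂ, AnalyticOnNhd ℂ h (ball c r) ∧ AnalyticOnNhd ℂ g (ball c r) ∧
      (∀ z ∈ ball c r, h z - g z = φ z) ∧ g c = 0 ∧
      ∀ z ∈ ball c r, deriv g z = ω z * deriv h z := by
  have hω1' : ∀ z ∈ ball c r, 1 - ω z ≠ 0 := fun z hz => sub_ne_zero.2 (hω1 z hz).symm
  have hdiff : DifferentiableOn ℂ (fun z => deriv φ z / (1 - ω z)) (ball c r) :=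
    (hφ.deriv isOpen_ball).div ((differentiableOn_const 1).sub hω) hω1'
  obtain ⟨h, hc, hh⟩ := hdiff.isExactOn_ball.with_val_at c (φ c)
  have hh_an : AnalyticOnNhd ℂ h (ball c r) :=
    DifferentiableOn.analyticOnNhd (fun z hz => (hh z hz).differentiableAt.differentiableWithinAt)
      isOpen_ball
  refine ⟨h, h - φ, hh_an, hh_an.sub (hφ.analyticOnNhd isOpen_ball),
    fun z _ => sub_sub_cancel _ _, by simp [hc], fun z hz => ?_⟩
  have hφz := (hφ.differentiableAt (isOpen_ball.mem_nhds hz)).hasDerivAt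
  rw [((hh z hz).sub hφz).deriv, (hh z hz).deriv]
  field_simp [hω1' z hz]
  ring

theorem schwarzian_id (z : ℂ) : schwarzian (fun w => w) z = 0 := by
  simp [schwarzian]

theorem hasDerivAt_exp_const_mul (b z : ℂ) :
    HasDerivAt (fun w => exp (b * w)) (b * exp (b * z)) z := by
  simpa [mul_comm] using ((hasDerivAt_id z).const_mul b).cexp

theorem schwarzian_exp_const_mul {b : ℂ} (hb : b ≠ 0) (z : ℂ) :
    schwarzian (fun w => exp (b * w)) z = -b ^ 2 / 2 := by
  have hd : deriv (fun w => exp (b * w)) = fun w => b * exp (b * w) :=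
    funext fun w => (hasDerivAt_exp_const_mul b w).deriv
  have hd2 : deriv (fun w => b * exp (b * w)) = fun w => b * (b * exp (b * w)) :=
    funext fun w => ((hasDerivAt_exp_const_mul b w).const_mul b).deriv
  have hratio (w : ℂ) : b * (b * exp (b * w)) / (b * exp (b * w)) = b :=
    mul_div_cancel_right₀ b (mul_ne_zero hb (exp_ne_zero _))
  rw [schwarzian, hd, hd2]
  simp only [hratio, deriv_const]
  ring

theorem exists_schwarzian_eq_const (c : ℂ) :
    ∃ φ : ℂ → ℂ, Differentiable ℂ φ ∧ (∀ z, deriv φ z ≠ 0) ∧ ∀ z, schwarzian φ z = c := by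
  obtain ⟨b, hb⟩ := IsAlgClosed.exists_pow_nat_eq (-2 * c) two_pos
  by_cases hb0 : b = 0
  · have hc : c = 0 := by simpa [hb0] using hb
    exact ⟨fun w => w, differentiable_id, by simp, fun z => by rw [schwarzian_id, hc]⟩
  · refine ⟨fun w => exp (b * w), fun w => (hasDerivAt_exp_const_mul b w).differentiableAt,
      fun z => ?_, fun z => ?_⟩
    · rw [(hasDerivAt_exp_const_mul b z).deriv]
      exact mul_ne_zero hb0 (exp_ne_zero _)
    · rw [schwarzian_exp_const_mul hb0, hb]
      ring

theorem sSup_image_ball_one_sub_norm_sq_sq_mul {F : ℂ → ℝ} {c : ℝ} (hc : 0 ≤ c)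
    (hF : ∀ z ∈ ball (0 : ℂ) 1, F z = c) :
    sSup ((fun z => (1 - ‖z‖ ^ 2) ^ 2 * F z) '' ball (0 : ℂ) 1) = c := by
  refine IsGreatest.csSup_eq
    ⟨⟨0, mem_ball_self one_pos, by simp [hF 0 (mem_ball_self one_pos)]⟩, ?_⟩
  rintro _ ⟨z, hz, rfl⟩
  have hz1 : ‖z‖ ^ 2 < 1 := pow_lt_one₀ (norm_nonneg z) (mem_ball_zero_iff.1 hz) two_ne_zero
  show (1 - ‖z‖ ^ 2) ^ 2 * F z ≤ c
  rw [hF z hz]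
  exact mul_le_of_le_one_left hc (by nlinarith [sq_nonneg ‖z‖])

theorem mul_sq_ne_one_of_norm_le_one {w z : ℂ} (hw : ‖w‖ ≤ 1) (hz : z ∈ ball (0 : ℂ) 1) :
    w * z ^ 2 ≠ 1 := by
  intro h
  have hz1 : ‖z‖ ^ 2 < 1 := pow_lt_one₀ (norm_nonneg z) (mem_ball_zero_iff.1 hz) two_ne_zero
  have : ‖w * z ^ 2‖ < 1 := by
    rw [norm_mul, norm_pow]
    exact mul_lt_one_of_nonneg_of_lt_one_right hw (by positivity) hz1
  simp [h] at this

theorem Sshear_of_eq_zero {φ q : ℂ → ℂ} {z : ℂ} (hq : q z = 0) :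
    Sshear φ q z = schwarzian φ z + 2 * deriv q z ^ 2 := by
  simp [Sshear, hq]

theorem PhiShear_const_mul_zero (φ : ℂ → ℂ) (a : ℂ) :
    PhiShear φ (fun z => a * z) 0 = ‖schwarzian φ 0 + 2 * a ^ 2‖ + 4 * ‖a ^ 2‖ := by
  have hq' : deriv (fun z => a * z) 0 = a :=
    ((hasDerivAt_id (0 : ℂ)).const_mul a).deriv.trans (mul_one a)
  simp [PhiShear, Sshear_of_eq_zero, hq']

theorem stmt_8_general (s t R : ℝ) (hs : s ∈ Set.Icc (0 : ℝ) 1)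
    (hst : s ≤ t) (hR1 : (t - s) / 3 < R) (hR2 : R ≤ 1) :
    ∃ φ q h g : ℂ → ℂ,
      AnalyticOnNhd ℂ φ (ball 0 1) ∧ AnalyticOnNhd ℂ q (ball 0 1) ∧
      (∀ z ∈ ball (0 : ℂ) 1, deriv φ z ≠ 0) ∧
      (∀ z ∈ ball (0 : ℂ) 1, (q z) ^ 2 ≠ 1) ∧
      sSup ((fun z => (1 - ‖z‖ ^ 2) ^ 2 * ‖schwarzian φ z‖) ''
        ball (0 : ℂ) 1) = 2 * s ∧
      (∀ z ∈ ball (0 : ℂ) 1, (q z) ^ 2 = (R : ℂ) * z ^ 2) ∧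
      AnalyticOnNhd ℂ h (ball 0 1) ∧ AnalyticOnNhd ℂ g (ball 0 1) ∧
      (∀ z ∈ ball (0 : ℂ) 1, h z - g z = φ z) ∧
      g 0 = 0 ∧
      (∀ z ∈ ball (0 : ℂ) 1, deriv g z = (q z) ^ 2 * deriv h z) ∧
      2 * t < PhiShear φ q 0 := by
  have hR0 : 0 < R := by linarith
  obtain ⟨φ, hφ, hφ', hSφ⟩ := exists_schwarzian_eq_const (2 * s)
  obtain ⟨a, ha⟩ := IsAlgClosed.exists_pow_nat_eq (R : ℂ) two_pos
  have hq2 (z : ℂ) : (a * z) ^ 2 = R * z ^ 2 := by rw [mul_pow, ha]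
  have hq1 (z : ℂ) (hz : z ∈ ball (0 : ℂ) 1) : (a * z) ^ 2 ≠ 1 := by
    rw [hq2]
    exact mul_sq_ne_one_of_norm_le_one (by rwa [Complex.norm_of_nonneg hR0.le]) hz
  obtain ⟨h, g, hh, hg, hhg, hg0, hgh⟩ :=
    exists_shear (ω := fun z => (a * z) ^ 2) hφ.differentiableOn (by fun_prop) hq1
  refine ⟨φ, fun z => a * z, h, g, hφ.differentiableOn.analyticOnNhd isOpen_ball,
    fun z _ => analyticAt_const.mul analyticAt_id, fun z _ => hφ' z, hq1, ?_,
    fun z _ => hq2 z, hh, hg, hhg, hg0, hgh, ?_⟩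
  · have h2s : ‖(2 * s : ℂ)‖ = 2 * s := by
      exact_mod_cast Complex.norm_of_nonneg (by linarith [hs.1])
    exact sSup_image_ball_one_sub_norm_sq_sq_mul (by linarith [hs.1]) fun z _ => by rw [hSφ, h2s]
  · have hS0 : ‖(2 * s + 2 * R : ℂ)‖ = 2 * s + 2 * R := by
      exact_mod_cast Complex.norm_of_nonneg (by linarith [hs.1])
    rw [PhiShear_const_mul_zero, hSφ, ha, hS0, Complex.norm_of_nonneg hR0.le]
    linarith

theorem stmt_8 (s t R : ℝ) (hs : s ∈ Set.Icc (0 : ℝ) 1) (ht : t ∈ Set.Icc (0 : ℝ) 1)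
    (hst : s ≤ t) (hR1 : (t - s) / 3 < R) (hR2 : R ≤ 1) :
    ∃ φ q h g : ℂ → ℂ,
      AnalyticOnNhd ℂ φ (ball 0 1) ∧ AnalyticOnNhd ℂ q (ball 0 1) ∧
      (∀ z ∈ ball (0 : ℂ) 1, deriv φ z ≠ 0) ∧
      (∀ z ∈ ball (0 : ℂ) 1, (q z) ^ 2 ≠ 1) ∧
      sSup ((fun z => (1 - ‖z‖ ^ 2) ^ 2 * ‖schwarzian φ z‖) ''
        ball (0 : ℂ) 1) = 2 * s ∧
      (∀ z ∈ ball (0 : ℂ) 1, (q z) ^ 2 = (R : ℂ) * z ^ 2) ∧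
      AnalyticOnNhd ℂ h (ball 0 1) ∧ AnalyticOnNhd ℂ g (ball 0 1) ∧
      (∀ z ∈ ball (0 : ℂ) 1, h z - g z = φ z) ∧
      g 0 = 0 ∧
      (∀ z ∈ ball (0 : ℂ) 1, deriv g z = (q z) ^ 2 * deriv h z) ∧
      2 * t < PhiShear φ q 0 :=
  stmt_8_general s t R hs hst hR1 hR2
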